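/- arXiv:1806.08124 — 3 statements merged into one kernel-verified Lean document; each statement's English description precedes it below -/
import Mathlib

section
/- Let μ, ȳ, ψ ∈ L²(Ω) with μ ≥ 0 a.e., ρ > 0, and set μ̄ := (μ + ρ(ȳ - ψ))₊. Then the positive part of the inner product satisfies (μ̄, ψ - ȳ)₊ ≤ (1/(2ρ))‖μ‖²_{L²(Ω)}, where (a)₊ := max(a, 0) for a real number a. -/
/-!
Pointwise, where `a := μ + ρ(ȳ - ψ)` is positive we have `ψ - ȳ = (μ - a)/ρ`, so
`μ̄ (ψ - ȳ) = a (μ - a)/ρ ≤ μ²/(4ρ)`, and elsewhere `μ̄ = 0`; integrate.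
-/

open MeasureTheory

lemma max_add_mul_sub_zero_mul_sub_le {ρ : ℝ} (hρ : 0 < ρ) (m y p : ℝ) :
    max (m + ρ * (y - p)) 0 * (p - y) ≤ 1 / (2 * ρ) * m ^ 2 := by
  rcases le_or_gt (m + ρ * (y - p)) 0 with h | h
  · rw [max_eq_right h, zero_mul]
    positivity
  · rw [max_eq_left h.le, div_mul_eq_mul_div, le_div_iff₀ (by positivity)]
    nlinarith [sq_nonneg (m - 2 * (m + ρ * (y - p)))]

theorem stmt_2_general {Ω : Type*} [MeasurableSpace Ω] (ν : Measure Ω)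
    (μ ybar ψ : Ω → ℝ) (ρ : ℝ) (hρ : 0 < ρ)
    (mubar : Ω → ℝ)
    (hmubar : ∀ x, mubar x = max (μ x + ρ * (ybar x - ψ x)) 0)
    (hint1 : Integrable (fun x => mubar x * (ψ x - ybar x)) ν)
    (hint2 : Integrable (fun x => (μ x) ^ 2) ν) :
    max (∫ x, mubar x * (ψ x - ybar x) ∂ν) 0 ≤
      (1 / (2 * ρ)) * ∫ x, (μ x) ^ 2 ∂ν := by
  refine max_le ?_ (mul_nonneg (by positivity) (integral_nonneg fun x => sq_nonneg _))
  calc ∫ x, mubar x * (ψ x - ybar x) ∂ν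
      ≤ ∫ x, (1 / (2 * ρ)) * (μ x) ^ 2 ∂ν :=
        integral_mono hint1 (hint2.const_mul _) fun x =>
          hmubar x ▸ max_add_mul_sub_zero_mul_sub_le hρ _ _ _
    _ = (1 / (2 * ρ)) * ∫ x, (μ x) ^ 2 ∂ν := integral_const_mul _ _

/-- `(μ̄, ψ - ȳ)₊ ≤ (1/(2ρ))‖μ‖²_{L²}` for `μ̄ = (μ + ρ(ȳ - ψ))₊`. -/
theorem stmt_2 {Ω : Type*} [MeasurableSpace Ω] (ν : Measure Ω)
    (μ ybar ψ : Ω → ℝ) (ρ : ℝ) (hρ : 0 < ρ)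
    (hμ : ∀ᵐ x ∂ν, 0 ≤ μ x)
    (mubar : Ω → ℝ)
    (hmubar : ∀ x, mubar x = max (μ x + ρ * (ybar x - ψ x)) 0)
    (hint1 : Integrable (fun x => mubar x * (ψ x - ybar x)) ν)
    (hint2 : Integrable (fun x => (μ x) ^ 2) ν) :
    max (∫ x, mubar x * (ψ x - ybar x) ∂ν) 0 ≤
      (1 / (2 * ρ)) * ∫ x, (μ x) ^ 2 ∂ν :=
  stmt_2_general ν μ ybar ψ ρ hρ mubar hmubar hint1 hint2
end

section
/- Let a_ρ, b_ρ ≥ 0 satisfy the inequality β·a_ρ² + (1/(2ρ))·b_ρ² ≤ c·(b_ρ/ρ)^{2/(2+N)} + M/(2ρ) for all ρ ≥ 1, where β, c, M > 0 and N ∈ {2, 3} are fixed. Then (1/ρ)·b_ρ² is uniformly bounded in ρ, and consequently a_ρ² ≤ c'·ρ^{-1/(2+N)} + M/(2βρ) for some constant c' > 0, so a_ρ → 0 as ρ → ∞. -/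
/-!
Put `s = b_ρ / √ρ`, so that `s² = b_ρ² / ρ`. Since `ρ ≥ 1` and the exponent `2/(2+N)` is at most
one, `(b_ρ/ρ)^{2/(2+N)} ≤ 1 + b_ρ/ρ ≤ 1 + s`, and the inequality becomes `s² ≤ 2c s + 2c + M`:
the right side grows only linearly in `s`, so `s² ≤ K := 4c² + 4c + 2M`. Feeding
`b_ρ/ρ ≤ (K/ρ)^{1/2}` back into the inequality gives `β a_ρ² ≤ c K^{1/(2+N)} ρ^{-1/(2+N)} + M/(2ρ)`.
-/

open Filter Topology

theorem Real.rpow_le_one_add_self {x e : ℝ} (hx : 0 ≤ x) (he₀ : 0 ≤ e) (he₁ : e ≤ 1) :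
    x ^ e ≤ 1 + x := by
  rcases le_total x 1 with hx1 | hx1
  · linarith [Real.rpow_le_one hx hx1 he₀]
  · linarith [Real.rpow_le_self_of_one_le hx1 he₁]

theorem Real.rpow_le_rpow_half_of_sq_le {x y e : ℝ} (hx : 0 ≤ x) (he : 0 ≤ e) (hxy : x ^ 2 ≤ y) :
    x ^ e ≤ y ^ (e / 2) := by
  calc x ^ e = (x ^ (2 : ℝ)) ^ (e / 2) := by
        rw [← Real.rpow_mul hx]; ring_nf
    _ ≤ y ^ (e / 2) := by
        rw [Real.rpow_two]; exact Real.rpow_le_rpow (by positivity) hxy (by positivity)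

theorem sq_le_of_sq_le_mul_add {s p q : ℝ} (h : s ^ 2 ≤ p * s + q) : s ^ 2 ≤ p ^ 2 + 2 * q := by
  nlinarith [sq_nonneg (s - p)]

theorem tendsto_nhds_zero_of_sq_le {α : Type*} {l : Filter α} {f g : α → ℝ}
    (hf : ∀ᶠ x in l, 0 ≤ f x) (hfg : ∀ᶠ x in l, f x ^ 2 ≤ g x) (hg : Tendsto g l (𝓝 0)) :
    Tendsto f l (𝓝 0) := by
  have hsqrt : Tendsto (fun x => √(g x)) l (𝓝 0) := by
    simpa using hg.sqrt
  refine tendsto_of_tendsto_of_tendsto_of_le_of_le' tendsto_const_nhds hsqrt hf ?_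
  filter_upwards [hf, hfg] with x hfx hfgx
  exact Real.le_sqrt_of_sq_le hfgx

section SelfBounding

variable {ρ b c M e : ℝ}

theorem sq_div_le_of_self_bounding (hρ : 1 ≤ ρ) (hb : 0 ≤ b) (hc : 0 ≤ c) (hM : 0 ≤ M)
    (he₀ : 0 ≤ e) (he₁ : e ≤ 1)
    (h : 1 / (2 * ρ) * b ^ 2 ≤ c * (b / ρ) ^ e + M / (2 * ρ)) :
    b ^ 2 / ρ ≤ 4 * c ^ 2 + 4 * c + 2 * M := by
  have hρ₀ : 0 < ρ := by linarith
  set s := b / √ρ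
  have hs : s ^ 2 = b ^ 2 / ρ := by rw [div_pow, Real.sq_sqrt hρ₀.le]
  have hbs : b / ρ ≤ s :=
    div_le_div_of_nonneg_left hb (by positivity) (Real.sqrt_le_self_iff.2 (Or.inr hρ))
  have hM' : M / (2 * ρ) ≤ M / 2 :=
    div_le_div_of_nonneg_left hM two_pos (by linarith)
  have hlin : s ^ 2 ≤ 2 * c * s + (2 * c + M) := by
    have hpow := Real.rpow_le_one_add_self (div_nonneg hb hρ₀.le) he₀ he₁
    have h' : 1 / (2 * ρ) * b ^ 2 = s ^ 2 / 2 := by rw [hs]; field_simp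
    nlinarith [mul_le_mul_of_nonneg_left (hpow.trans (by linarith : 1 + b / ρ ≤ 1 + s)) hc]
  rw [← hs]
  linarith [sq_le_of_sq_le_mul_add hlin]

theorem rpow_div_le_of_sq_div_le {K : ℝ} (hρ : 0 < ρ) (hb : 0 ≤ b) (he : 0 ≤ e)
    (h : b ^ 2 / ρ ≤ K) :
    (b / ρ) ^ e ≤ K ^ (e / 2) * ρ ^ (-(e / 2)) := by
  have hK : 0 ≤ K := (by positivity : 0 ≤ b ^ 2 / ρ).trans h
  have hsq : (b / ρ) ^ 2 ≤ K / ρ := by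
    rw [div_pow, sq ρ, ← div_div]
    exact div_le_div_of_nonneg_right h hρ.le
  calc (b / ρ) ^ e ≤ (K / ρ) ^ (e / 2) := Real.rpow_le_rpow_half_of_sq_le (by positivity) he hsq
    _ = K ^ (e / 2) * ρ ^ (-(e / 2)) := by
        rw [Real.div_rpow hK hρ.le, Real.rpow_neg hρ.le, div_eq_mul_inv]

end SelfBounding

theorem stmt_10_general (a b : ℝ → ℝ) (β c M : ℝ) (N : ℕ)
    (hβ : 0 < β) (hc : 0 < c) (hM : 0 < M)
    (ha : ∀ ρ ≥ (1 : ℝ), 0 ≤ a ρ) (hb : ∀ ρ ≥ (1 : ℝ), 0 ≤ b ρ)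
    (hineq : ∀ ρ ≥ (1 : ℝ),
      β * (a ρ) ^ 2 + (1 / (2 * ρ)) * (b ρ) ^ 2 ≤
        c * (b ρ / ρ) ^ ((2 : ℝ) / (2 + N)) + M / (2 * ρ)) :
    (∃ K : ℝ, ∀ ρ ≥ (1 : ℝ), (1 / ρ) * (b ρ) ^ 2 ≤ K) ∧
    (∃ c' > (0 : ℝ), ∀ ρ ≥ (1 : ℝ),
      (a ρ) ^ 2 ≤ c' * ρ ^ (-(1 : ℝ) / (2 + N)) + M / (2 * β * ρ)) ∧
    Tendsto a atTop (𝓝 0) := by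
  set e : ℝ := 2 / (2 + N) with he
  have he₁ : e ≤ 1 := (div_le_one (by positivity)).2 (by simp)
  have hexp : -(1 : ℝ) / (2 + N) = -(e / 2) := by rw [he]; ring
  set K := 4 * c ^ 2 + 4 * c + 2 * M
  have hbound : ∀ ρ ≥ (1 : ℝ), b ρ ^ 2 / ρ ≤ K := fun ρ hρ =>
    sq_div_le_of_self_bounding hρ (hb ρ hρ) hc.le hM.le (by positivity) he₁
      (by nlinarith [hineq ρ hρ, sq_nonneg (a ρ)])
  have hdecay : ∀ ρ ≥ (1 : ℝ),
      a ρ ^ 2 ≤ c * K ^ (e / 2) / β * ρ ^ (-(1 : ℝ) / (2 + N)) + M / (2 * β * ρ) := by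
    intro ρ hρ
    have hρ₀ : 0 < ρ := by linarith
    have hpow := rpow_div_le_of_sq_div_le (e := e) hρ₀ (hb ρ hρ) (by positivity) (hbound ρ hρ)
    have hβa : β * a ρ ^ 2 ≤ c * (K ^ (e / 2) * ρ ^ (-(e / 2))) + M / (2 * ρ) := by
      nlinarith [hineq ρ hρ, mul_le_mul_of_nonneg_left hpow hc.le,
        (by positivity : 0 ≤ 1 / (2 * ρ) * b ρ ^ 2)]
    rw [hexp, ← mul_le_mul_iff_right₀ hβ]
    calc β * a ρ ^ 2 ≤ _ := hβa
      _ = _ := by field_simp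
  refine ⟨⟨K, fun ρ hρ => by simpa [one_div, inv_mul_eq_div] using hbound ρ hρ⟩,
    ⟨_, by positivity, hdecay⟩, ?_⟩
  refine tendsto_nhds_zero_of_sq_le (eventually_ge_atTop 1 |>.mono ha)
    (eventually_ge_atTop 1 |>.mono hdecay) ?_
  rw [hexp]
  simpa using ((tendsto_rpow_neg_atTop (by positivity)).const_mul _).add
    (tendsto_const_nhds.div_atTop (tendsto_id.const_mul_atTop (by positivity)))

/-- Abstract quantitative convergence argument: from the self-bounding inequality
`β a_ρ² + (1/(2ρ)) b_ρ² ≤ c (b_ρ/ρ)^{2/(2+N)} + M/(2ρ)` one obtains uniform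
boundedness of `(1/ρ) b_ρ²`, the decay estimate for `a_ρ²`, and `a_ρ → 0`. -/
theorem stmt_10 (a b : ℝ → ℝ) (β c M : ℝ) (N : ℕ)
    (hβ : 0 < β) (hc : 0 < c) (hM : 0 < M) (hN : N = 2 ∨ N = 3)
    (ha : ∀ ρ ≥ (1 : ℝ), 0 ≤ a ρ) (hb : ∀ ρ ≥ (1 : ℝ), 0 ≤ b ρ)
    (hineq : ∀ ρ ≥ (1 : ℝ),
      β * (a ρ) ^ 2 + (1 / (2 * ρ)) * (b ρ) ^ 2 ≤
        c * (b ρ / ρ) ^ ((2 : ℝ) / (2 + N)) + M / (2 * ρ)) :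
    (∃ K : ℝ, ∀ ρ ≥ (1 : ℝ), (1 / ρ) * (b ρ) ^ 2 ≤ K) ∧
    (∃ c' > (0 : ℝ), ∀ ρ ≥ (1 : ℝ),
      (a ρ) ^ 2 ≤ c' * ρ ^ (-(1 : ℝ) / (2 + N)) + M / (2 * β * ρ)) ∧
    Tendsto a atTop (𝓝 0) :=
  stmt_10_general a b β c M N hβ hc hM ha hb hineq
end

section
/- Let Ω be a finite measure space, μ_n, μ ∈ 𝓜(Ω̄) (regular Borel measures on a compact metric space Ω̄) with μ_n ≥ 0, μ_n ⇀* μ weakly-*, and y_n, y ∈ C(Ω̄) with ‖y_n - y‖_{C(Ω̄)} → 0. Suppose ⟨μ_n, ψ - y_n⟩₊ → 0 and y ≤ ψ pointwise on Ω̄. Then μ ≥ 0 and ⟨μ, ψ - y⟩ = 0. -/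
/-!
A positive functional on `C(X, ℝ)` satisfies `|Λ φ| ≤ ‖φ‖ * Λ 1`, so along a weak-* convergent
sequence of positive functionals the operator norms are bounded by the convergent `Λₙ 1`, and the
pairing with norm-convergent functions converges. The limit `⟨μ, ψ - y⟩` of `⟨μₙ, ψ - yₙ⟩` is then
`≤ 0` by complementarity and `≥ 0` since `y ≤ ψ` and `μ ≥ 0`.
-/

open Filter Topology

section PositiveFunctional

variable {X : Type*} [TopologicalSpace X] [CompactSpace X]

lemma ContinuousMap.abs_apply_le_norm_mul_apply_one {Λ : C(X, ℝ) →L[ℝ] ℝ}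
    (hΛ : ∀ φ, 0 ≤ φ → 0 ≤ Λ φ) (φ : C(X, ℝ)) : |Λ φ| ≤ ‖φ‖ * Λ 1 := by
  have hφ (x : X) : -‖φ‖ ≤ φ x ∧ φ x ≤ ‖φ‖ := abs_le.mp (φ.norm_coe_le_norm x)
  have hupper := hΛ (‖φ‖ • 1 - φ) fun x => by simpa using (hφ x).2
  have hlower := hΛ (‖φ‖ • 1 + φ) fun x => by simpa [neg_le_iff_add_nonneg'] using (hφ x).1
  simp only [map_sub, map_add, map_smul, smul_eq_mul] at hupper hlower
  exact abs_le.mpr ⟨by linarith, by linarith⟩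

lemma ContinuousMap.tendsto_apply_apply_of_tendsto {ι : Type*} {l : Filter ι}
    {Λ : ι → C(X, ℝ) →L[ℝ] ℝ} {Λ₀ : C(X, ℝ) →L[ℝ] ℝ} (hΛ : ∀ i φ, 0 ≤ φ → 0 ≤ Λ i φ)
    (hlim : ∀ φ, Tendsto (fun i => Λ i φ) l (𝓝 (Λ₀ φ)))
    {φ : ι → C(X, ℝ)} {φ₀ : C(X, ℝ)} (hφ : Tendsto φ l (𝓝 φ₀)) :
    Tendsto (fun i => Λ i (φ i)) l (𝓝 (Λ₀ φ₀)) := by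
  have herr : Tendsto (fun i => Λ i (φ i - φ₀)) l (𝓝 0) := by
    have hbound : Tendsto (fun i => ‖φ i - φ₀‖ * Λ i 1) l (𝓝 0) := by
      simpa using (tendsto_iff_norm_sub_tendsto_zero.mp hφ).mul (hlim 1)
    exact squeeze_zero_norm (fun i => abs_apply_le_norm_mul_apply_one (hΛ i) _) hbound
  simpa using (hlim φ₀).add herr

end PositiveFunctional

theorem stmt_17_general {Ω : Type*} [TopologicalSpace Ω] [CompactSpace Ω]
    (μn : ℕ → (C(Ω, ℝ) →L[ℝ] ℝ)) (μ : C(Ω, ℝ) →L[ℝ] ℝ)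
    (hpos : ∀ n, ∀ φ : C(Ω, ℝ), (∀ x, 0 ≤ φ x) → 0 ≤ μn n φ)
    (hweak : ∀ φ : C(Ω, ℝ), Tendsto (fun n => μn n φ) atTop (𝓝 (μ φ)))
    (y : ℕ → C(Ω, ℝ)) (ystar ψ : C(Ω, ℝ))
    (hyconv : Tendsto (fun n => ‖y n - ystar‖) atTop (𝓝 0))
    (hcompl : Tendsto (fun n => max (μn n (ψ - y n)) 0) atTop (𝓝 0))
    (hfeas : ∀ x, ystar x ≤ ψ x) :
    (∀ φ : C(Ω, ℝ), (∀ x, 0 ≤ φ x) → 0 ≤ μ φ) ∧ μ (ψ - ystar) = 0 := by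
  have hμpos (φ : C(Ω, ℝ)) (hφ : 0 ≤ φ) : 0 ≤ μ φ :=
    ge_of_tendsto' (hweak φ) fun n => hpos n φ hφ
  have hpair : Tendsto (fun n => μn n (ψ - y n)) atTop (𝓝 (μ (ψ - ystar))) :=
    ContinuousMap.tendsto_apply_apply_of_tendsto hpos hweak
      (tendsto_const_nhds.sub (tendsto_iff_norm_sub_tendsto_zero.mpr hyconv))
  have hle : max (μ (ψ - ystar)) 0 = 0 :=
    tendsto_nhds_unique (hpair.max tendsto_const_nhds) hcompl
  have hge : 0 ≤ μ (ψ - ystar) := hμpos _ fun x => sub_nonneg.mpr (hfeas x)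
  exact ⟨hμpos, le_antisymm (max_eq_right_iff.mp hle) hge⟩

/-- Passing the complementarity condition to the limit: weak-* convergent
nonnegative functionals `μ_n` on `C(Ω̄)` paired with uniformly convergent `y_n`
yield `μ ≥ 0` and `⟨μ, ψ - y⟩ = 0`. -/
theorem stmt_17 {Ω : Type*} [TopologicalSpace Ω] [CompactSpace Ω] [MetricSpace Ω]
    (μn : ℕ → (C(Ω, ℝ) →L[ℝ] ℝ)) (μ : C(Ω, ℝ) →L[ℝ] ℝ)
    (hpos : ∀ n, ∀ φ : C(Ω, ℝ), (∀ x, 0 ≤ φ x) → 0 ≤ μn n φ)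
    (hweak : ∀ φ : C(Ω, ℝ), Tendsto (fun n => μn n φ) atTop (𝓝 (μ φ)))
    (y : ℕ → C(Ω, ℝ)) (ystar ψ : C(Ω, ℝ))
    (hyconv : Tendsto (fun n => ‖y n - ystar‖) atTop (𝓝 0))
    (hcompl : Tendsto (fun n => max (μn n (ψ - y n)) 0) atTop (𝓝 0))
    (hfeas : ∀ x, ystar x ≤ ψ x) :
    (∀ φ : C(Ω, ℝ), (∀ x, 0 ≤ φ x) → 0 ≤ μ φ) ∧ μ (ψ - ystar) = 0 :=
  stmt_17_general μn μ hpos hweak y ystar ψ hyconv hcompl hfeas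
end
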